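/- arXiv:1309.1635 — 3 statements merged into one kernel-verified Lean document; each statement's English description precedes it below -/
import Mathlib

section
/- Let U be a nonempty set and N, D : U → ℝ with D(u) > 0 for all u ∈ U. Suppose g = sup_{u∈U} N(u)/D(u) satisfies 0 < g < ∞. Suppose there exists ū ∈ U such that N(u) ≤ N(ū) + g·(D(u) − D(ū)) for all u ∈ U, and suppose there exists t > 0 with t > D(ū) such that N(u)/D(u) ≤ g/2 whenever D(u) > t. Then N(ū)/D(ū) = g, i.e., the supremum of the ratio is attained at ū. -/
/-- Abstract attainment lemma for ratios: if `g` is the least upper bound of `N/D`,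
`0 < g`, the profile `ū` satisfies the linear domination `N(u) ≤ N(ū) + g(D(u) − D(ū))`,
and the ratio is at most `g/2` when the denominator exceeds `t > D(ū)`, then the
supremum is attained at `ū`. -/
theorem stmt14 {U : Type*} [Nonempty U] (N D : U → ℝ) (hD : ∀ u, 0 < D u) (g : ℝ)
    (hg : IsLUB (Set.range fun u => N u / D u) g) (hg0 : 0 < g)
    (ubar : U) (hdom : ∀ u, N u ≤ N ubar + g * (D u - D ubar))
    (t : ℝ) (ht0 : 0 < t) (htD : D ubar < t)
    (htail : ∀ u, t < D u → N u / D u ≤ g / 2) :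
    N ubar / D ubar = g := by
  have hDb := hD ubar
  have hle : N ubar / D ubar ≤ g := hg.1 ⟨ubar, rfl⟩
  by_contra hne
  have hlt : N ubar / D ubar < g := lt_of_le_of_ne hle hne
  have hkey : N ubar - g * D ubar < 0 := by
    have := (div_lt_iff₀ hDb).mp hlt
    linarith
  set c := max (g / 2) ((N ubar + g * (t - D ubar)) / t) with hc
  have hub : ∀ u, N u / D u ≤ c := by
    intro u
    by_cases h : t < D u
    · exact le_max_of_le_left (htail u h)
    · push_neg at h
      have hDu := hD u
      refine le_max_of_le_right ?_
      rw [div_le_div_iff₀ hDu ht0]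
      have h1 := hdom u
      nlinarith [mul_nonneg (le_of_lt (neg_pos.mpr hkey)) (sub_nonneg.mpr h)]
  have hcub : c ∈ upperBounds (Set.range fun u => N u / D u) := by
    rintro x ⟨u, rfl⟩
    exact hub u
  have hgc : g ≤ c := hg.2 hcub
  have hclt : c < g := by
    apply max_lt
    · linarith
    · rw [div_lt_iff₀ ht0]
      nlinarith
  linarith
end

section
/- Let α ≥ β with α + β > 0 and let (ξ_i)_{i∈ℕ} be i.i.d. with P(ξ_i = β) = P(ξ_i = −α) = 1/2. Fix γ, η > 0 and K, n ∈ ℕ. Let Ê_{n,K}^γ be the collection of all ordered families (I_1,…,I_N) of at most n/K pairwise disjoint nonempty discrete intervals in {1,…,n} with total length T(I) = ∑_j |I_j| ≥ γ·n. Then P(∃ (I) ∈ Ê_{n,K}^γ : ∑_j ∑_{i∈I_j} ξ_i > ((β−α)/2 + η)·T(I)) ≤ (∑_{N=1}^{⌊n/K⌋} C(n+N, 2N)) · exp(−2η²γn/(α+β)²). Consequently, for every γ, η > 0 there exists K̂ ∈ ℕ such that for all K ≥ K̂ this probability tends to 0 as n → ∞. -/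
open MeasureTheory ProbabilityTheory Filter
open scoped ENNReal

/-- The bad event: some ordered family of at most `n/K` disjoint nonempty discrete
intervals in `{1,…,n}`, of total length at least `γ·n`, on which the disorder sum
exceeds `((β−α)/2 + η)` times the total length. -/
def badSet {Ω : Type*} (ξ : ℕ → Ω → ℝ) (α β γ η : ℝ) (K n : ℕ) : Set Ω :=
  {ω | ∃ N : ℕ, 1 ≤ N ∧ N * K ≤ n ∧ ∃ a b : Fin N → ℕ,
    (∀ j, 1 ≤ a j ∧ a j ≤ b j ∧ b j ≤ n) ∧
    (∀ i j : Fin N, (i : ℕ) + 1 = (j : ℕ) → b i < a j) ∧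
    γ * n ≤ ((∑ j, (b j + 1 - a j) : ℕ) : ℝ) ∧
    ((β - α) / 2 + η) * ((∑ j, (b j + 1 - a j) : ℕ) : ℝ) <
      ∑ j, ∑ i ∈ Finset.Icc (a j) (b j), ξ i ω}


lemma aux_mgf {Ω : Type*} [MeasurableSpace Ω] (μ : Measure Ω) [IsProbabilityMeasure μ]
    (α β t : ℝ) (hne : β ≠ -α) (X : Ω → ℝ) (hX : Measurable X)
    (h1 : μ {ω | X ω = β} = 1/2) (h2 : μ {ω | X ω = -α} = 1/2) :
    Integrable (fun ω => Real.exp (t * X ω)) μ ∧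
    mgf X μ t = (Real.exp (t*β) + Real.exp (t*(-α)))/2 := by
  set A : Set Ω := {ω | X ω = β} with hA
  set B : Set Ω := {ω | X ω = -α} with hB
  have mA : MeasurableSet A := hX (measurableSet_singleton β)
  have mB : MeasurableSet B := hX (measurableSet_singleton (-α))
  have hdisj : Disjoint A B := by
    rw [Set.disjoint_left]
    intro ω hωA hωB
    exact hne (hωA ▸ hωB)
  set g : Ω → ℝ := A.indicator (fun _ => Real.exp (t*β)) + B.indicator (fun _ => Real.exp (t*(-α))) with hg
  have hU : μ (A ∪ B)ᶜ = 0 := by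
    have : μ (A ∪ B) = 1 := by
      rw [measure_union hdisj mB, h1, h2]
      norm_num
      rw [ENNReal.inv_two_add_inv_two]
    rw [measure_compl (mA.union mB) (measure_ne_top _ _), this, measure_univ, tsub_self]
  have hae : ∀ᵐ ω ∂μ, ω ∈ A ∪ B := by
    rw [MeasureTheory.ae_iff]
    convert hU using 2
    rfl
  have heq : (fun ω => Real.exp (t * X ω)) =ᵐ[μ] g := by
    filter_upwards [hae] with ω hω
    rcases hω with hω | hω
    · have hnB : ω ∉ B := fun h => hne (hω ▸ h)
      simp [hg, Set.indicator_of_mem hω, Set.indicator_of_notMem hnB, hω.out]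
    · have hnA : ω ∉ A := fun h => hne (h ▸ hω)
      simp [hg, Set.indicator_of_mem hω, Set.indicator_of_notMem hnA, hω.out]
  have hgint : Integrable g μ :=
    ((integrable_const _).indicator mA).add ((integrable_const _).indicator mB)
  have hint : Integrable (fun ω => Real.exp (t * X ω)) μ := hgint.congr heq.symm
  refine ⟨hint, ?_⟩
  rw [mgf, integral_congr_ae heq, hg]
  rw [show ((A.indicator fun _ => Real.exp (t*β)) + B.indicator fun _ => Real.exp (t*(-α)))
      = fun ω => (A.indicator fun _ => Real.exp (t*β)) ω + (B.indicator fun _ => Real.exp (t*(-α))) ω from rfl]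
  rw [integral_add ((integrable_const _).indicator mA) ((integrable_const _).indicator mB),
    integral_indicator_const _ mA, integral_indicator_const _ mB, measureReal_def, measureReal_def, h1, h2]
  simp [ENNReal.toReal_div]
  ring

lemma aux_hoeff {Ω : Type*} [MeasurableSpace Ω] (μ : Measure Ω) [IsProbabilityMeasure μ]
    (α β : ℝ) (hαβ : 0 < α + β)
    (ξ : ℕ → Ω → ℝ) (hmeas : ∀ i, Measurable (ξ i))
    (hindep : iIndepFun ξ μ)
    (hdist : ∀ i, μ {ω | ξ i ω = β} = 1 / 2 ∧ μ {ω | ξ i ω = -α} = 1 / 2)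
    (η : ℝ) (hη : 0 < η) (s : Finset ℕ) :
    μ {ω | ((β - α) / 2 + η) * (s.card : ℝ) ≤ ∑ i ∈ s, ξ i ω} ≤
      ENNReal.ofReal (Real.exp (-2 * η ^ 2 * s.card / (α + β) ^ 2)) := by
  have hne : β ≠ -α := by intro h; simp [h] at hαβ
  have hαβ' : (α + β) ≠ 0 := ne_of_gt hαβ
  set t : ℝ := 4 * η / (α + β) ^ 2 with hT
  have ht : 0 ≤ t := by positivity
  have hint : ∀ i, Integrable (fun ω => Real.exp (t * ξ i ω)) μ := fun i =>
    (aux_mgf μ α β t hne (ξ i) (hmeas i) (hdist i).1 (hdist i).2).1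
  have hmgf : ∀ i, mgf (ξ i) μ t = (Real.exp (t*β) + Real.exp (t*(-α)))/2 := fun i =>
    (aux_mgf μ α β t hne (ξ i) (hmeas i) (hdist i).1 (hdist i).2).2
  set ε : ℝ := ((β - α) / 2 + η) * (s.card : ℝ) with hε
  have key := measure_ge_le_exp_mul_mgf (μ := μ) (X := ∑ i ∈ s, ξ i) ε ht
    (hindep.integrable_exp_mul_sum hmeas (fun i _ => hint i))
  rw [hindep.mgf_sum hmeas s] at key
  simp only [hmgf, Finset.prod_const] at key
  have hset : {ω | ((β - α) / 2 + η) * (s.card : ℝ) ≤ ∑ i ∈ s, ξ i ω}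
      = {ω | ε ≤ (∑ i ∈ s, ξ i) ω} := by
    ext ω; simp [hε, Finset.sum_apply]
  -- per factor bound
  have hcosh : (Real.exp (t*β) + Real.exp (t*(-α)))/2
      = Real.exp (t*(β-α)/2) * Real.cosh (t*(α+β)/2) := by
    have e1 : t*β = t*(β-α)/2 + t*(α+β)/2 := by ring
    have e2 : t*(-α) = t*(β-α)/2 + (-(t*(α+β)/2)) := by ring
    rw [e1, e2, Real.exp_add, Real.exp_add, Real.cosh_eq]; ring
  have hper : (Real.exp (t*β) + Real.exp (t*(-α)))/2
      ≤ Real.exp (t*(β-α)/2 + (t*(α+β)/2)^2/2) := by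
    rw [hcosh, Real.exp_add]
    exact mul_le_mul_of_nonneg_left (Real.cosh_le_exp_half_sq _) (Real.exp_nonneg _)
  have hpernn : (0:ℝ) ≤ (Real.exp (t*β) + Real.exp (t*(-α)))/2 := by positivity
  have hchain : (μ {ω | ε ≤ (∑ i ∈ s, ξ i) ω}).toReal
      ≤ Real.exp (-2 * η ^ 2 * s.card / (α + β) ^ 2) := by
    refine key.trans ?_
    calc Real.exp (-t * ε) * ((Real.exp (t*β) + Real.exp (t*(-α)))/2) ^ s.card
        ≤ Real.exp (-t * ε) * (Real.exp (t*(β-α)/2 + (t*(α+β)/2)^2/2)) ^ s.card := by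
          gcongr
      _ = Real.exp (-t * ε + s.card * (t*(β-α)/2 + (t*(α+β)/2)^2/2)) := by
          rw [← Real.exp_nat_mul, ← Real.exp_add]
      _ = Real.exp (-2 * η ^ 2 * s.card / (α + β) ^ 2) := by
          congr 1
          rw [hε, hT]
          field_simp
          ring
  rw [hset]
  calc μ {ω | ε ≤ (∑ i ∈ s, ξ i) ω}
      = ENNReal.ofReal (μ {ω | ε ≤ (∑ i ∈ s, ξ i) ω}).toReal :=
        (ENNReal.ofReal_toReal (measure_ne_top μ _)).symm
    _ ≤ _ := ENNReal.ofReal_le_ofReal hchain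


def ggAux (N : ℕ) (p : (Fin N → ℕ) × (Fin N → ℕ)) (k : ℕ) : ℕ :=
  if h : k / 2 < N then (if Even k then p.1 ⟨k/2, h⟩ + k/2 else p.2 ⟨k/2, h⟩ + k/2 + 1) else 0

lemma ggAux_even (N : ℕ) (p : (Fin N → ℕ) × (Fin N → ℕ)) (j : ℕ) (h : j < N) :
    ggAux N p (2*j) = p.1 ⟨j, h⟩ + j := by
  have h2 : 2 * j / 2 = j := by omega
  simp only [ggAux, h2, dif_pos h, if_pos (even_two_mul j)]

lemma ggAux_odd (N : ℕ) (p : (Fin N → ℕ) × (Fin N → ℕ)) (j : ℕ) (h : j < N) :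
    ggAux N p (2*j+1) = p.2 ⟨j, h⟩ + j + 1 := by
  have h2 : (2 * j + 1) / 2 = j := by omega
  have hodd : ¬ Even (2*j+1) := by simp [Nat.even_iff]
  simp only [ggAux, h2, dif_pos h, if_neg hodd]

lemma ggAux_mono (n N : ℕ) (p : (Fin N → ℕ) × (Fin N → ℕ))
    (hp1 : ∀ j, 1 ≤ p.1 j ∧ p.1 j ≤ p.2 j ∧ p.2 j ≤ n)
    (hp2 : ∀ i j : Fin N, (i : ℕ) + 1 = (j : ℕ) → p.2 i < p.1 j) :
    ∀ l, l < 2*N → ∀ k, k < l → ggAux N p k < ggAux N p l := by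
  intro l
  induction l with
  | zero => omega
  | succ l ih =>
    intro hl k hk
    have hstep : ggAux N p l < ggAux N p (l+1) := by
      rcases Nat.even_or_odd l with ⟨j, hj⟩ | ⟨j, hj⟩
      · have hl2 : l = 2*j := by omega
        subst hl2
        have hjN : j < N := by omega
        rw [ggAux_even _ _ _ hjN, ggAux_odd _ _ _ hjN]
        have := (hp1 ⟨j, hjN⟩).2.1
        omega
      · have hjN : j + 1 < N := by omega
        have hjN' : j < N := by omega
        have hl2 : l = 2*j+1 := by omega
        subst hl2
        rw [ggAux_odd _ _ _ hjN', show 2*j+1+1 = 2*(j+1) by ring, ggAux_even _ _ _ hjN]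
        have := hp2 ⟨j, hjN'⟩ ⟨j+1, hjN⟩ rfl
        omega
    rcases Nat.lt_succ_iff_lt_or_eq.mp hk with h | h
    · exact (ih (by omega) k h).trans hstep
    · subst h; exact hstep

lemma aux_count (n N : ℕ) (src : Finset ((Fin N → ℕ) × (Fin N → ℕ)))
    (hvalid : ∀ p ∈ src, (∀ j, 1 ≤ p.1 j ∧ p.1 j ≤ p.2 j ∧ p.2 j ≤ n) ∧
      (∀ i j : Fin N, (i : ℕ) + 1 = (j : ℕ) → p.2 i < p.1 j)) :
    src.card ≤ (n + N).choose (2 * N) := by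
  classical
  set F : ((Fin N → ℕ) × (Fin N → ℕ)) → Finset ℕ :=
    fun p => Finset.image (fun k : Fin (2*N) => ggAux N p k.val) Finset.univ with hF
  have hsm : ∀ p ∈ src, StrictMono (fun k : Fin (2*N) => ggAux N p k.val) := by
    intro p hp k1 k2 hk
    exact ggAux_mono n N p (hvalid p hp).1 (hvalid p hp).2 k2.val k2.isLt k1.val hk
  have hcard : ∀ p ∈ src, (F p).card = 2*N := by
    intro p hp
    rw [hF]
    rw [Finset.card_image_of_injective _ (hsm p hp).injective, Finset.card_univ, Fintype.card_fin]
  have hmem : ∀ p ∈ src, ∀ k : Fin (2*N), ggAux N p k.val ∈ Finset.Icc 1 (n+N) := by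
    intro p hp k
    rcases Nat.even_or_odd k.val with ⟨j, hj⟩ | ⟨j, hj⟩
    · have hjN : j < N := by have := k.isLt; omega
      have hv : k.val = 2*j := by omega
      rw [hv, ggAux_even _ _ _ hjN]
      have h1 := (hvalid p hp).1 ⟨j, hjN⟩
      simp only [Finset.mem_Icc]
      omega
    · have hjN : j < N := by have := k.isLt; omega
      have hv : k.val = 2*j+1 := by omega
      rw [hv, ggAux_odd _ _ _ hjN]
      have h1 := (hvalid p hp).1 ⟨j, hjN⟩
      simp only [Finset.mem_Icc]
      omega
  have hmaps : ∀ p ∈ src, F p ∈ Finset.powersetCard (2*N) (Finset.Icc 1 (n+N)) := by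
    intro p hp
    rw [Finset.mem_powersetCard]
    constructor
    · intro x hx
      rw [hF, Finset.mem_image] at hx
      obtain ⟨k, -, rfl⟩ := hx
      exact hmem p hp k
    · exact hcard p hp
  have hinj : Set.InjOn F src := by
    intro p hp q hq hpq
    have heqf : (fun k : Fin (2*N) => ggAux N p k.val) = (fun k : Fin (2*N) => ggAux N q k.val) := by
      have h1 := Finset.orderEmbOfFin_unique (hcard p hp)
        (f := fun k : Fin (2*N) => ggAux N p k.val)
        (fun k => Finset.mem_image_of_mem _ (Finset.mem_univ k)) (hsm p hp)
      have h2 := Finset.orderEmbOfFin_unique (hcard p hp)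
        (f := fun k : Fin (2*N) => ggAux N q k.val)
        (fun k => by rw [hpq]; exact Finset.mem_image_of_mem _ (Finset.mem_univ k)) (hsm q hq)
      rw [h1, h2]
    have ha : p.1 = q.1 := by
      funext j
      have := congrFun heqf ⟨2*j.val, by omega⟩
      simp only at this
      rw [ggAux_even _ _ _ j.isLt, ggAux_even _ _ _ j.isLt] at this
      simp only [Fin.eta] at this
      omega
    have hb : p.2 = q.2 := by
      funext j
      have := congrFun heqf ⟨2*j.val+1, by omega⟩
      simp only at this
      rw [ggAux_odd _ _ _ j.isLt, ggAux_odd _ _ _ j.isLt] at this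
      simp only [Fin.eta] at this
      omega
    exact Prod.ext ha hb
  calc src.card ≤ (Finset.powersetCard (2*N) (Finset.Icc 1 (n+N))).card :=
        Finset.card_le_card_of_injOn F hmaps hinj
    _ = (n + N).choose (2*N) := by
        rw [Finset.card_powersetCard, Nat.card_Icc]
        norm_num


section auxc

lemma aux_lt_of_lt {N : ℕ} (a b : Fin N → ℕ) (hab : ∀ j, a j ≤ b j)
    (hord : ∀ i j : Fin N, (i : ℕ) + 1 = (j : ℕ) → b i < a j) :
    ∀ i j : Fin N, (i : ℕ) < (j : ℕ) → b i < a j := by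
  have key : ∀ d : ℕ, ∀ i j : Fin N, (i : ℕ) + d + 1 = (j : ℕ) → b i < a j := by
    intro d
    induction d with
    | zero => intro i j h; exact hord i j (by omega)
    | succ d ih =>
      intro i j h
      have hj' : (i : ℕ) + d + 1 < N := by have := j.isLt; omega
      have h1 := ih i ⟨(i : ℕ) + d + 1, hj'⟩ rfl
      have h2 := hord ⟨(i : ℕ) + d + 1, hj'⟩ j (by simp; omega)
      have h3 := hab ⟨(i : ℕ) + d + 1, hj'⟩
      omega
  intro i j hij
  exact key ((j : ℕ) - (i : ℕ) - 1) i j (by omega)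

lemma aux_interval {N : ℕ} (a b : Fin N → ℕ) (hab : ∀ j, a j ≤ b j)
    (hord : ∀ i j : Fin N, (i : ℕ) + 1 = (j : ℕ) → b i < a j) :
    (Finset.univ.biUnion fun j => Finset.Icc (a j) (b j)).card = ∑ j, (b j + 1 - a j) ∧
    ∀ f : ℕ → ℝ, ∑ i ∈ Finset.univ.biUnion fun j => Finset.Icc (a j) (b j), f i
      = ∑ j, ∑ i ∈ Finset.Icc (a j) (b j), f i := by
  have hlt := aux_lt_of_lt a b hab hord
  have hdisj : ∀ i : Fin N, i ∈ Finset.univ → ∀ j : Fin N, j ∈ Finset.univ → i ≠ j →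
      Disjoint (Finset.Icc (a i) (b i)) (Finset.Icc (a j) (b j)) := by
    intro i _ j _ hij
    rcases Ne.lt_or_gt hij with h | h
    · refine Finset.disjoint_left.mpr fun x hx hx2 => ?_
      rw [Finset.mem_Icc] at hx hx2
      have := hlt i j h
      omega
    · refine Finset.disjoint_left.mpr fun x hx hx2 => ?_
      rw [Finset.mem_Icc] at hx hx2
      have := hlt j i h
      omega
  constructor
  · rw [Finset.card_biUnion hdisj]
    exact Finset.sum_congr rfl fun j _ => Nat.card_Icc _ _
  · intro f
    exact Finset.sum_biUnion fun i hi j hj hij => hdisj i hi j hj hij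

lemma aux_choose_mono (m : ℕ) : ∀ r s : ℕ, r ≤ s → s ≤ m / 2 → m.choose r ≤ m.choose s := by
  intro r s hrs
  induction s, hrs using Nat.le_induction with
  | base => intro _; exact le_refl _
  | succ s hs ih =>
    intro hsm
    exact (ih (by omega)).trans (Nat.choose_le_succ_of_lt_half_left (by omega))

lemma aux_f_mono (n x y : ℝ) (hx : 0 < x) (hxy : x ≤ y) (hyn : y ≤ n) :
    x * (1 + Real.log n - Real.log x) ≤ y * (1 + Real.log n - Real.log y) := by
  have hy : 0 < y := lt_of_lt_of_le hx hxy
  have h0 : Real.log (y / x) ≤ y / x - 1 := Real.log_le_sub_one_of_pos (by positivity)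
  have h1 : x * (Real.log y - Real.log x) ≤ y - x := by
    have h2 := mul_le_mul_of_nonneg_left h0 hx.le
    rw [mul_sub, mul_div_cancel₀ _ hx.ne', mul_one, Real.log_div hy.ne' hx.ne'] at h2
    linarith
  have h2 : Real.log y ≤ Real.log n := Real.log_le_log hy hyn
  nlinarith [mul_nonneg (sub_nonneg.2 hxy) (sub_nonneg.2 h2)]

lemma aux_real (c : ℝ) (hc : 0 < c) : ∃ Khat : ℕ, 2 ≤ Khat ∧ ∀ K : ℕ, Khat ≤ K →
    Tendsto (fun n : ℕ => (∑ N ∈ Finset.Icc 1 (n / K), ((n + N).choose (2 * N) : ℝ)) *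
      Real.exp (-(c * n))) atTop (nhds 0) := by
  -- choose Khat
  have hlog : Tendsto (fun x : ℝ => (1 + Real.log x) / x) atTop (nhds 0) := by
    have h1 : Tendsto (fun x : ℝ => x⁻¹) atTop (nhds 0) := tendsto_inv_atTop_zero
    have h2 : Tendsto (fun x : ℝ => Real.log x / x) atTop (nhds 0) :=
      Real.isLittleO_log_id_atTop.tendsto_div_nhds_zero
    have := h1.add h2
    rw [add_zero] at this
    refine this.congr' ?_
    filter_upwards [eventually_ne_atTop 0] with x hx
    field_simp
  have hev : ∀ᶠ x : ℝ in atTop, (1 + Real.log x) / x < c / 4 :=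
    hlog.eventually_lt_const (by positivity)
  obtain ⟨x0, hx0⟩ := eventually_atTop.mp hev
  refine ⟨max 2 ⌈x0⌉₊, le_max_left _ _, fun K hKK => ?_⟩
  have hK2 : 2 ≤ K := le_trans (le_max_left _ _) hKK
  set Khat := max 2 ⌈x0⌉₊ with hKhat
  have hKhat2 : 2 ≤ Khat := le_max_left _ _
  have hKhatx0 : (x0 : ℝ) ≤ Khat := le_trans (Nat.le_ceil x0) (by exact_mod_cast le_max_right 2 ⌈x0⌉₊)
  have hKhatlt : (1 + Real.log Khat) / Khat < c / 4 := hx0 _ hKhatx0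
  -- the squeeze bound
  have hb : ∀ n : ℕ, (∑ N ∈ Finset.Icc 1 (n / K), ((n + N).choose (2 * N) : ℝ)) *
      Real.exp (-(c * n)) ≤ (n : ℝ) * Real.exp (-(c / 2 * n)) := by
    intro n
    set M := n / K with hM
    rcases Nat.eq_zero_or_pos M with hM0 | hM1
    · rw [hM0]
      simp [Finset.Icc_eq_empty_of_lt]
      positivity
    · have hKn : K ≤ n := by
        by_contra h
        push_neg at h
        have : M = 0 := Nat.div_eq_of_lt h
        omega
      have hn1 : 1 ≤ n := by omega
      have hMn2 : M ≤ n / 2 := Nat.div_le_div_left hK2 (by norm_num)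
      have h2Mn : 2 * M ≤ n := by omega
      have hMn : M ≤ n := by omega
      -- nat sum bound
      have hsum : (∑ N ∈ Finset.Icc 1 M, (n + N).choose (2 * N)) ≤ M * (2 * n).choose (2 * M) := by
        calc (∑ N ∈ Finset.Icc 1 M, (n + N).choose (2 * N))
            ≤ ∑ _N ∈ Finset.Icc 1 M, (2 * n).choose (2 * M) := by
              refine Finset.sum_le_sum fun N hN => ?_
              rw [Finset.mem_Icc] at hN
              calc (n + N).choose (2 * N) ≤ (2 * n).choose (2 * N) :=
                    Nat.choose_le_choose _ (by omega)
                _ ≤ (2 * n).choose (2 * M) :=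
                    aux_choose_mono _ _ _ (by omega) (by omega)
          _ = M * (2 * n).choose (2 * M) := by
              rw [Finset.sum_const, Nat.card_Icc, smul_eq_mul]
              simp
      -- real bound for the binomial
      have hMR : (0 : ℝ) < M := by exact_mod_cast hM1
      have hnR : (0 : ℝ) < n := by exact_mod_cast hn1
      have hchoose : ((2 * n).choose (2 * M) : ℝ) ≤ ((n : ℝ) / M) ^ (2 * M) * Real.exp (2 * M) := by
        have h1 : ((2 * n).choose (2 * M) : ℝ) ≤ ((2 * n : ℕ) : ℝ) ^ (2 * M) / (((2 * M).factorial : ℕ) : ℝ) :=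
          Nat.choose_le_pow_div _ _
        have h2 : ((2 * M : ℕ) : ℝ) ^ (2 * M) / (((2 * M).factorial : ℕ) : ℝ) ≤ Real.exp ((2 * M : ℕ) : ℝ) :=
          Real.pow_div_factorial_le_exp (x := ((2 * M : ℕ) : ℝ)) (by positivity) _
        have h3 : ((2 * n : ℕ) : ℝ) ^ (2 * M) / (((2 * M).factorial : ℕ) : ℝ)
            = ((n : ℝ) / M) ^ (2 * M) * (((2 * M : ℕ) : ℝ) ^ (2 * M) / (((2 * M).factorial : ℕ) : ℝ)) := by
          rw [mul_div_assoc', ← mul_pow]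
          congr 2
          push_cast
          field_simp
        calc ((2 * n).choose (2 * M) : ℝ)
            ≤ ((n : ℝ) / M) ^ (2 * M) * (((2 * M : ℕ) : ℝ) ^ (2 * M) / (((2 * M).factorial : ℕ) : ℝ)) :=
              h3 ▸ h1
          _ ≤ ((n : ℝ) / M) ^ (2 * M) * Real.exp (((2 * M : ℕ) : ℝ)) :=
              mul_le_mul_of_nonneg_left h2 (by positivity)
          _ = ((n : ℝ) / M) ^ (2 * M) * Real.exp (2 * M) := by norm_num
      -- exponent form
      have hpow : ((n : ℝ) / M) ^ (2 * M) * Real.exp (2 * M)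
          = Real.exp (2 * ((M : ℝ) * (1 + Real.log n - Real.log M))) := by
        rw [show ((n : ℝ) / M) ^ (2 * M) = Real.exp ((2 * M : ℕ) * Real.log ((n : ℝ) / M)) by
          rw [← Real.exp_log (show (0:ℝ) < (n : ℝ) / M by positivity), ← Real.exp_nat_mul,
            Real.log_exp]]
        rw [← Real.exp_add, Real.log_div hnR.ne' hMR.ne']
        congr 1
        push_cast
        ring
      -- monotonicity step
      have hfm : (M : ℝ) * (1 + Real.log n - Real.log M)
          ≤ ((n : ℝ) / Khat) * (1 + Real.log Khat) := by
        have hKhatR : (0 : ℝ) < Khat := by positivity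
        have hMy : (M : ℝ) ≤ (n : ℝ) / Khat := by
          calc (M : ℝ) ≤ (n : ℝ) / K := by rw [hM]; exact_mod_cast Nat.cast_div_le
            _ ≤ (n : ℝ) / Khat := by
              apply div_le_div_of_nonneg_left hnR.le hKhatR
              exact_mod_cast hKK
        have hyn : (n : ℝ) / Khat ≤ n := by
          apply div_le_self hnR.le
          exact_mod_cast hKhat2.trans' (by norm_num)
        have := aux_f_mono n M ((n : ℝ) / Khat) hMR hMy hyn
        calc (M : ℝ) * (1 + Real.log n - Real.log M)
            ≤ ((n : ℝ) / Khat) * (1 + Real.log n - Real.log ((n : ℝ) / Khat)) := this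
          _ = ((n : ℝ) / Khat) * (1 + Real.log Khat) := by
              rw [Real.log_div hnR.ne' hKhatR.ne']
              ring
      have hexp : 2 * ((M : ℝ) * (1 + Real.log n - Real.log M)) ≤ c / 2 * n := by
        have h1 : ((n : ℝ) / Khat) * (1 + Real.log Khat) = (n : ℝ) * ((1 + Real.log Khat) / Khat) := by
          ring
        have h2 : (n : ℝ) * ((1 + Real.log Khat) / Khat) ≤ (n : ℝ) * (c / 4) :=
          mul_le_mul_of_nonneg_left hKhatlt.le hnR.le
        nlinarith [hfm]
      -- put it together
      have hsumR : (∑ N ∈ Finset.Icc 1 M, ((n + N).choose (2 * N) : ℝ))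
          ≤ (M : ℝ) * ((2 * n).choose (2 * M) : ℝ) := by
        exact_mod_cast Nat.cast_le.mpr hsum
      calc (∑ N ∈ Finset.Icc 1 M, ((n + N).choose (2 * N) : ℝ)) * Real.exp (-(c * n))
          ≤ ((M : ℝ) * Real.exp (2 * ((M : ℝ) * (1 + Real.log n - Real.log M)))) *
              Real.exp (-(c * n)) := by
            refine mul_le_mul_of_nonneg_right ?_ (Real.exp_nonneg _)
            refine hsumR.trans ?_
            rw [← hpow]
            exact mul_le_mul_of_nonneg_left hchoose hMR.le
        _ ≤ ((n : ℝ) * Real.exp (c / 2 * n)) * Real.exp (-(c * n)) := by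
            refine mul_le_mul_of_nonneg_right ?_ (Real.exp_nonneg _)
            refine mul_le_mul (by exact_mod_cast hMn) (Real.exp_le_exp.mpr hexp)
              (Real.exp_nonneg _) hnR.le
        _ = (n : ℝ) * Real.exp (-(c / 2 * n)) := by
            rw [mul_assoc, ← Real.exp_add]
            congr 2
            ring
  -- the dominating sequence tends to 0
  have hdom : Tendsto (fun n : ℕ => (n : ℝ) * Real.exp (-(c / 2 * n))) atTop (nhds 0) := by
    have h1 : Tendsto (fun x : ℝ => x * Real.exp (-x)) atTop (nhds 0) := by
      simpa using Real.tendsto_pow_mul_exp_neg_atTop_nhds_zero 1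
    have h2 : Tendsto (fun n : ℕ => c / 2 * n) atTop atTop :=
      (tendsto_natCast_atTop_atTop (R := ℝ)).const_mul_atTop (by positivity)
    have h3 := (h1.comp h2).const_mul (2 / c)
    rw [mul_zero] at h3
    refine h3.congr fun n => ?_
    simp only [Function.comp_apply]
    field_simp
  refine squeeze_zero (fun n => ?_) hb hdom
  have : (0:ℝ) ≤ ∑ N ∈ Finset.Icc 1 (n / K), ((n + N).choose (2 * N) : ℝ) :=
    Finset.sum_nonneg fun _ _ => by positivity
  positivity

end auxc

/-- Large deviation estimate for the excursion sums of the copolymer disorder: union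
bound over interval families combined with Hoeffding's inequality, and vanishing of the
bad event's probability for `K` large. -/
theorem stmt18 {Ω : Type*} [MeasurableSpace Ω] (μ : Measure Ω) [IsProbabilityMeasure μ]
    (α β : ℝ) (hβα : β ≤ α) (hαβ : 0 < α + β)
    (ξ : ℕ → Ω → ℝ) (hmeas : ∀ i, Measurable (ξ i))
    (hindep : iIndepFun ξ μ)
    (hdist : ∀ i, μ {ω | ξ i ω = β} = 1 / 2 ∧ μ {ω | ξ i ω = -α} = 1 / 2)
    (γ η : ℝ) (hγ : 0 < γ) (hη : 0 < η) :
    (∀ K n : ℕ, 0 < K →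
      μ (badSet ξ α β γ η K n) ≤
        ENNReal.ofReal ((∑ N ∈ Finset.Icc 1 (n / K), ((n + N).choose (2 * N) : ℝ)) *
          Real.exp (-2 * η ^ 2 * γ * n / (α + β) ^ 2))) ∧
    ∃ Khat : ℕ, ∀ K : ℕ, Khat ≤ K →
      Tendsto (fun n => μ (badSet ξ α β γ η K n)) atTop (nhds 0) := by
  classical
  have hc : (0:ℝ) < 2 * η ^ 2 * γ / (α + β) ^ 2 := by positivity
  have main1 : ∀ K n : ℕ, 0 < K →
      μ (badSet ξ α β γ η K n) ≤
        ENNReal.ofReal ((∑ N ∈ Finset.Icc 1 (n / K), ((n + N).choose (2 * N) : ℝ)) *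
          Real.exp (-2 * η ^ 2 * γ * n / (α + β) ^ 2)) := by
    intro K n hK
    set E := Real.exp (-2 * η ^ 2 * γ * n / (α + β) ^ 2) with hE
    have hconf : ∀ (N : ℕ) (p : (Fin N → ℕ) × (Fin N → ℕ)),
        (∀ j, 1 ≤ p.1 j ∧ p.1 j ≤ p.2 j ∧ p.2 j ≤ n) →
        (∀ i j : Fin N, (i : ℕ) + 1 = (j : ℕ) → p.2 i < p.1 j) →
        γ * n ≤ ((∑ j, (p.2 j + 1 - p.1 j) : ℕ) : ℝ) →
        μ {ω | ((β - α) / 2 + η) * ((∑ j, (p.2 j + 1 - p.1 j) : ℕ) : ℝ)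
            ≤ ∑ j, ∑ i ∈ Finset.Icc (p.1 j) (p.2 j), ξ i ω} ≤ ENNReal.ofReal E := by
      intro N p h1 h2 h3
      obtain ⟨hcard, hsum⟩ := aux_interval p.1 p.2 (fun j => (h1 j).2.1) h2
      set s := Finset.univ.biUnion fun j => Finset.Icc (p.1 j) (p.2 j) with hs
      have hset : {ω | ((β - α) / 2 + η) * ((∑ j, (p.2 j + 1 - p.1 j) : ℕ) : ℝ)
          ≤ ∑ j, ∑ i ∈ Finset.Icc (p.1 j) (p.2 j), ξ i ω}
          = {ω | ((β - α) / 2 + η) * (s.card : ℝ) ≤ ∑ i ∈ s, ξ i ω} := by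
        ext ω
        rw [Set.mem_setOf_eq, Set.mem_setOf_eq, hcard, hsum (fun i => ξ i ω)]
      rw [hset]
      refine (aux_hoeff μ α β hαβ ξ hmeas hindep hdist η hη s).trans ?_
      apply ENNReal.ofReal_le_ofReal
      apply Real.exp_le_exp.mpr
      have hsq : (0:ℝ) < (α + β) ^ 2 := by positivity
      rw [div_le_div_iff₀ hsq hsq]
      have hT : γ * n ≤ (s.card : ℝ) := by rw [hcard]; exact h3
      nlinarith [mul_le_mul_of_nonneg_left hT (by positivity : (0:ℝ) ≤ 2 * η ^ 2), sq_nonneg (α + β), hsq]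
    set SN := fun N : ℕ => Finset.filter (fun p : (Fin N → ℕ) × (Fin N → ℕ) =>
        (∀ j, 1 ≤ p.1 j ∧ p.1 j ≤ p.2 j ∧ p.2 j ≤ n) ∧
        (∀ i j : Fin N, (i : ℕ) + 1 = (j : ℕ) → p.2 i < p.1 j) ∧
        γ * n ≤ ((∑ j, (p.2 j + 1 - p.1 j) : ℕ) : ℝ))
      ((Fintype.piFinset fun _ => Finset.Icc 0 n) ×ˢ (Fintype.piFinset fun _ => Finset.Icc 0 n)) with hSN
    set ev := fun (N : ℕ) (p : (Fin N → ℕ) × (Fin N → ℕ)) =>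
      {ω | ((β - α) / 2 + η) * ((∑ j, (p.2 j + 1 - p.1 j) : ℕ) : ℝ)
          ≤ ∑ j, ∑ i ∈ Finset.Icc (p.1 j) (p.2 j), ξ i ω} with hev
    have hsub : badSet ξ α β γ η K n ⊆ ⋃ N ∈ Finset.Icc 1 (n / K), ⋃ p ∈ SN N, ev N p := by
      rintro ω ⟨N, hN1, hNK, a, b, h1, h2, h3, h4⟩
      refine Set.mem_iUnion₂.mpr ⟨N, ?_, Set.mem_iUnion₂.mpr ⟨(a, b), ?_, h4.le⟩⟩
      · rw [Finset.mem_Icc]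
        exact ⟨hN1, (Nat.le_div_iff_mul_le hK).mpr hNK⟩
      · rw [hSN, Finset.mem_filter, Finset.mem_product]
        refine ⟨⟨?_, ?_⟩, h1, h2, h3⟩
        · rw [Fintype.mem_piFinset]
          intro j
          rw [Finset.mem_Icc]
          exact ⟨Nat.zero_le _, le_trans (h1 j).2.1 (h1 j).2.2⟩
        · rw [Fintype.mem_piFinset]
          intro j
          rw [Finset.mem_Icc]
          exact ⟨Nat.zero_le _, (h1 j).2.2⟩
    calc μ (badSet ξ α β γ η K n)
        ≤ μ (⋃ N ∈ Finset.Icc 1 (n / K), ⋃ p ∈ SN N, ev N p) := measure_mono hsub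
      _ ≤ ∑ N ∈ Finset.Icc 1 (n / K), μ (⋃ p ∈ SN N, ev N p) :=
          measure_biUnion_finset_le _ _
      _ ≤ ∑ N ∈ Finset.Icc 1 (n / K), ∑ p ∈ SN N, μ (ev N p) :=
          Finset.sum_le_sum fun N _ => measure_biUnion_finset_le _ _
      _ ≤ ∑ N ∈ Finset.Icc 1 (n / K), ((n + N).choose (2 * N) : ℝ≥0∞) * ENNReal.ofReal E := by
          refine Finset.sum_le_sum fun N _ => ?_
          have hb : ∀ p ∈ SN N, μ (ev N p) ≤ ENNReal.ofReal E := by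
            intro p hp
            rw [hSN, Finset.mem_filter] at hp
            exact hconf N p hp.2.1 hp.2.2.1 hp.2.2.2
          calc ∑ p ∈ SN N, μ (ev N p) ≤ ∑ _p ∈ SN N, ENNReal.ofReal E := Finset.sum_le_sum hb
            _ = (SN N).card • ENNReal.ofReal E := Finset.sum_const _
            _ ≤ ((n + N).choose (2 * N) : ℝ≥0∞) * ENNReal.ofReal E := by
                rw [nsmul_eq_mul]
                have hcount : (SN N).card ≤ (n + N).choose (2 * N) := by
                  refine aux_count n N (SN N) fun p hp => ?_
                  rw [hSN, Finset.mem_filter] at hp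
                  exact ⟨hp.2.1, hp.2.2.1⟩
                exact mul_le_mul_left (by exact_mod_cast hcount) _
      _ = ENNReal.ofReal ((∑ N ∈ Finset.Icc 1 (n / K), ((n + N).choose (2 * N) : ℝ)) * E) := by
          rw [ENNReal.ofReal_mul (Finset.sum_nonneg fun _ _ => by positivity),
            ENNReal.ofReal_sum_of_nonneg (fun _ _ => by positivity), Finset.sum_mul]
          refine Finset.sum_congr rfl fun N _ => ?_
          rw [ENNReal.ofReal_natCast]
  refine ⟨main1, ?_⟩
  obtain ⟨Khat, hKhat2, htend⟩ := aux_real _ hc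
  refine ⟨Khat, fun K hKK => ?_⟩
  have hKpos : 0 < K := by omega
  have h0 := htend K hKK
  have hup : Tendsto (fun n : ℕ => ENNReal.ofReal
      ((∑ N ∈ Finset.Icc 1 (n / K), ((n + N).choose (2 * N) : ℝ)) *
        Real.exp (-2 * η ^ 2 * γ * n / (α + β) ^ 2))) atTop (nhds 0) := by
    have heq : (fun n : ℕ => ENNReal.ofReal
        ((∑ N ∈ Finset.Icc 1 (n / K), ((n + N).choose (2 * N) : ℝ)) *
          Real.exp (-2 * η ^ 2 * γ * n / (α + β) ^ 2)))
        = fun n : ℕ => ENNReal.ofReal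
        ((∑ N ∈ Finset.Icc 1 (n / K), ((n + N).choose (2 * N) : ℝ)) *
          Real.exp (-(2 * η ^ 2 * γ / (α + β) ^ 2 * n))) := by
      funext n
      rw [show -2 * η ^ 2 * γ * (n:ℝ) / (α + β) ^ 2
        = -(2 * η ^ 2 * γ / (α + β) ^ 2 * n) by ring]
    rw [heq]
    have h1 := ENNReal.tendsto_ofReal h0
    simpa using h1
  exact tendsto_of_tendsto_of_tendsto_of_le_of_le tendsto_const_nhds hup
    (fun n => zero_le) (fun n => main1 K n hKpos)
end

section
/- Let t < m be reals, let (t_n) be a sequence in [t, m) with t_n → t, and for each n let f_n : [t_n, m] → ℝ be strictly concave and continuous, converging pointwise on (t, m] to a strictly concave continuous f_∞ : [t, m] → ℝ, with f_n(t_n) → f_∞(t). Fix y ∈ ℝ and let u_n ∈ [t_n, m] be the maximizer of u ↦ f_n(u) − y·u on [t_n, m], and u_∞ ∈ [t, m] the maximizer of u ↦ f_∞(u) − y·u on [t, m] (maximizers are unique by strict concavity). Then u_n → u_∞ as n → ∞. -/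
open Filter Set

private lemma eps_le {a b : ℝ} (h : ∀ ε : ℝ, 0 < ε → a ≤ b + ε) : a ≤ b := by
  by_contra hc
  push_neg at hc
  have := h ((a - b)/2) (by linarith)
  linarith

private lemma concave_bound_right {s : Set ℝ} {f : ℝ → ℝ} (hf : ConcaveOn ℝ s f)
    {p c b : ℝ} (hp : p ∈ s) (hb : b ∈ s) (hpc : p < c) (hcb : c < b) :
    f p ≤ f c + (c - p) * ((f c - f b) / (b - c)) := by
  have h := hf.slope_anti_adjacent hp hb hpc hcb
  have hcp : (0:ℝ) < c - p := by linarith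
  have h1 := mul_le_mul_of_nonneg_left h hcp.le
  have h2 : (c - p) * ((f c - f p)/(c - p)) = f c - f p := by
    rw [mul_comm, div_mul_cancel₀ _ hcp.ne']
  have h3 : (c - p) * ((f b - f c)/(b - c)) = -((c - p) * ((f c - f b)/(b - c))) := by
    ring
  linarith

private lemma concave_bound_left {s : Set ℝ} {f : ℝ → ℝ} (hf : ConcaveOn ℝ s f)
    {a a' p : ℝ} (ha : a ∈ s) (hp : p ∈ s) (haa : a < a') (hap : a' < p) :
    f p ≤ f a' + (p - a') * ((f a' - f a) / (a' - a)) := by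
  have h := hf.slope_anti_adjacent ha hp haa hap
  have hpa : (0:ℝ) < p - a' := by linarith
  have h1 := mul_le_mul_of_nonneg_left h hpa.le
  have h2 : (p - a') * ((f p - f a')/(p - a')) = f p - f a' := by
    rw [mul_comm, div_mul_cancel₀ _ hpa.ne']
  linarith

/-- Continuity of maximizers of tilted strictly concave functions: if `f_n → f_∞`
pointwise on `(t,m]`, `f_n(t_n) → f_∞(t)` with `t_n → t`, then the unique maximizers of
`u ↦ f_n(u) − y·u` on `[t_n,m]` converge to that of `u ↦ f_∞(u) − y·u` on `[t,m]`. -/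
theorem stmt19 (t m : ℝ) (htm : t < m) (tseq : ℕ → ℝ)
    (htseq : ∀ n, t ≤ tseq n ∧ tseq n < m)
    (htlim : Filter.Tendsto tseq Filter.atTop (nhds t))
    (fseq : ℕ → ℝ → ℝ) (finf : ℝ → ℝ)
    (hfconc : ∀ n, StrictConcaveOn ℝ (Set.Icc (tseq n) m) (fseq n))
    (hfcont : ∀ n, ContinuousOn (fseq n) (Set.Icc (tseq n) m))
    (hconcinf : StrictConcaveOn ℝ (Set.Icc t m) finf)
    (hcontinf : ContinuousOn finf (Set.Icc t m))
    (hptwise : ∀ u ∈ Set.Ioc t m,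
      Filter.Tendsto (fun n => fseq n u) Filter.atTop (nhds (finf u)))
    (hend : Filter.Tendsto (fun n => fseq n (tseq n)) Filter.atTop (nhds (finf t)))
    (y : ℝ) (useq : ℕ → ℝ) (uinf : ℝ)
    (huseq : ∀ n, useq n ∈ Set.Icc (tseq n) m ∧
      ∀ v ∈ Set.Icc (tseq n) m, fseq n v - y * v ≤ fseq n (useq n) - y * useq n)
    (huinf : uinf ∈ Set.Icc t m ∧
      ∀ v ∈ Set.Icc t m, finf v - y * v ≤ finf uinf - y * uinf) :
    Filter.Tendsto useq Filter.atTop (nhds uinf) := by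
  have key : ∀ u' ∈ Set.Icc t m, ∀ φ : ℕ → ℕ, Tendsto φ atTop atTop →
      Tendsto (fun k => useq (φ k)) atTop (nhds u') → u' = uinf := by
    intro u' hu' φ hφ hconv
    -- Step A: eventual upper bound on the values at the maximizers
    have stepA : ∀ ε : ℝ, 0 < ε →
        ∀ᶠ k in atTop, fseq (φ k) (useq (φ k)) ≤ finf u' + ε := by
      intro ε hε
      have hcont := hcontinf u' hu'
      rw [Metric.continuousWithinAt_iff] at hcont
      obtain ⟨δ₁, hδ₁, hδball⟩ := hcont (ε/16) (by linarith)
      rcases lt_or_eq_of_le hu'.2 with hum | hum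
      · -- case u' < m : anchor points to the right of u'
        set δ := min (δ₁/3) ((m - u')/2) with hδdef
        have hδpos : 0 < δ := lt_min (by linarith) (by linarith)
        have hδle : δ ≤ δ₁/3 := min_le_left _ _
        have hδle2 : δ ≤ (m - u')/2 := min_le_right _ _
        set c := u' + δ with hcdef
        set b := u' + 2*δ with hbdef
        have htc : t < c := lt_of_le_of_lt hu'.1 (by simp only [hcdef]; linarith)
        have hcm : c ≤ m := by simp only [hcdef]; linarith
        have hbm : b ≤ m := by simp only [hbdef]; linarith
        have htb : t < b := lt_of_le_of_lt hu'.1 (by simp only [hbdef]; linarith)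
        have hfc : |finf c - finf u'| < ε/16 := by
          have hd : dist c u' < δ₁ := by
            rw [Real.dist_eq, show c - u' = δ by simp only [hcdef]; ring,
              abs_of_pos hδpos]
            linarith
          have := hδball ⟨htc.le, hcm⟩ hd
          rwa [Real.dist_eq] at this
        have hfb : |finf b - finf u'| < ε/16 := by
          have hd : dist b u' < δ₁ := by
            rw [Real.dist_eq, show b - u' = 2*δ by simp only [hbdef]; ring,
              abs_of_pos (by linarith)]
            linarith
          have := hδball ⟨htb.le, hbm⟩ hd
          rwa [Real.dist_eq] at this
        obtain ⟨hfc1, hfc2⟩ := abs_lt.mp hfc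
        obtain ⟨hfb1, hfb2⟩ := abs_lt.mp hfb
        have E1 : ∀ᶠ k in atTop, tseq (φ k) < c :=
          (htlim.comp hφ).eventually_lt_const htc
        have E2 : ∀ᶠ k in atTop, useq (φ k) < c :=
          hconv.eventually_lt_const (by simp only [hcdef]; linarith)
        have E3 : ∀ᶠ k in atTop, fseq (φ k) c < finf c + ε/16 :=
          ((hptwise c ⟨htc, hcm⟩).comp hφ).eventually_lt_const (by linarith)
        have E4 : ∀ᶠ k in atTop, finf b - ε/16 < fseq (φ k) b :=
          ((hptwise b ⟨htb, hbm⟩).comp hφ).eventually_const_lt (by linarith)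
        have E5 : ∀ᶠ k in atTop, u' - δ < useq (φ k) :=
          hconv.eventually_const_lt (by linarith)
        filter_upwards [E1, E2, E3, E4, E5] with k h1 h2 h3 h4 h5
        set n := φ k with hn
        set p := useq n with hpdef
        have hpmem : p ∈ Set.Icc (tseq n) m := (huseq n).1
        have hbmem : b ∈ Set.Icc (tseq n) m :=
          ⟨by simp only [hbdef]; simp only [hcdef] at h1; linarith, hbm⟩
        have hbound := concave_bound_right (hfconc n).concaveOn hpmem hbmem h2
          (show c < b by simp only [hcdef, hbdef]; linarith)
        have hbc : b - c = δ := by simp only [hcdef, hbdef]; ring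
        rw [hbc] at hbound
        have hcp2 : c - p < 2*δ := by simp only [hcdef]; linarith
        have hcp0 : 0 < c - p := by linarith
        rcases le_or_gt (fseq n c - fseq n b) 0 with hD | hD
        · have hterm : (c - p) * ((fseq n c - fseq n b)/δ) ≤ 0 :=
            mul_nonpos_of_nonneg_of_nonpos hcp0.le
              (div_nonpos_iff.mpr (Or.inr ⟨hD, hδpos.le⟩))
          linarith
        · have h6 : (c - p) * ((fseq n c - fseq n b)/δ)
              ≤ (2*δ) * ((fseq n c - fseq n b)/δ) :=
            mul_le_mul_of_nonneg_right hcp2.le (div_pos hD hδpos).le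
          have h7 : (2*δ) * ((fseq n c - fseq n b)/δ) = 2*(fseq n c - fseq n b) := by
            field_simp
          linarith
      · -- case u' = m : anchor points to the left of m
        rw [hum] at hδball hconv ⊢
        set δ := min (δ₁/3) ((m - t)/3) with hδdef
        have hδpos : 0 < δ := lt_min (by linarith) (by linarith)
        have hδle : δ ≤ δ₁/3 := min_le_left _ _
        have hδle2 : δ ≤ (m - t)/3 := min_le_right _ _
        set a := m - 2*δ with hadef
        set a' := m - δ with ha'def
        have hta : t < a := by simp only [hadef]; linarith
        have ham : a ≤ m := by simp only [hadef]; linarith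
        have hta' : t < a' := by simp only [ha'def]; linarith
        have ha'm : a' ≤ m := by simp only [ha'def]; linarith
        have hfa : |finf a - finf m| < ε/16 := by
          have hd : dist a m < δ₁ := by
            rw [Real.dist_eq, show a - m = -(2*δ) by simp only [hadef]; ring,
              abs_neg, abs_of_pos (by linarith)]
            linarith
          have := hδball ⟨hta.le, ham⟩ hd
          rwa [Real.dist_eq] at this
        have hfa' : |finf a' - finf m| < ε/16 := by
          have hd : dist a' m < δ₁ := by
            rw [Real.dist_eq, show a' - m = -δ by simp only [ha'def]; ring,
              abs_neg, abs_of_pos hδpos]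
            linarith
          have := hδball ⟨hta'.le, ha'm⟩ hd
          rwa [Real.dist_eq] at this
        obtain ⟨hfa1, hfa2⟩ := abs_lt.mp hfa
        obtain ⟨hfa'1, hfa'2⟩ := abs_lt.mp hfa'
        have E1 : ∀ᶠ k in atTop, tseq (φ k) < a :=
          (htlim.comp hφ).eventually_lt_const hta
        have E2 : ∀ᶠ k in atTop, a' < useq (φ k) :=
          hconv.eventually_const_lt (by simp only [ha'def]; linarith)
        have E3 : ∀ᶠ k in atTop, fseq (φ k) a' < finf a' + ε/16 :=
          ((hptwise a' ⟨hta', ha'm⟩).comp hφ).eventually_lt_const (by linarith)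
        have E4 : ∀ᶠ k in atTop, finf a - ε/16 < fseq (φ k) a :=
          ((hptwise a ⟨hta, ham⟩).comp hφ).eventually_const_lt (by linarith)
        filter_upwards [E1, E2, E3, E4] with k h1 h2 h3 h4
        set n := φ k with hn
        set p := useq n with hpdef
        have hpmem : p ∈ Set.Icc (tseq n) m := (huseq n).1
        have hamem : a ∈ Set.Icc (tseq n) m := ⟨h1.le, ham⟩
        have hbound := concave_bound_left (hfconc n).concaveOn hamem hpmem
          (show a < a' by simp only [hadef, ha'def]; linarith) h2
        have haa : a' - a = δ := by simp only [hadef, ha'def]; ring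
        rw [haa] at hbound
        have hpa2 : p - a' ≤ δ := by
          have := hpmem.2; simp only [ha'def]; linarith
        have hpa0 : 0 < p - a' := by linarith
        rcases le_or_gt (fseq n a' - fseq n a) 0 with hD | hD
        · have hterm : (p - a') * ((fseq n a' - fseq n a)/δ) ≤ 0 :=
            mul_nonpos_of_nonneg_of_nonpos hpa0.le
              (div_nonpos_iff.mpr (Or.inr ⟨hD, hδpos.le⟩))
          linarith
        · have h6 : (p - a') * ((fseq n a' - fseq n a)/δ)
              ≤ δ * ((fseq n a' - fseq n a)/δ) :=
            mul_le_mul_of_nonneg_right hpa2 (div_pos hD hδpos).le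
          have h7 : δ * ((fseq n a' - fseq n a)/δ) = fseq n a' - fseq n a := by
            field_simp
          linarith
    -- Step B: u' is also a maximizer of v ↦ finf v - y v on [t, m]
    have stepB : ∀ v ∈ Set.Icc t m, finf v - y * v ≤ finf u' - y * u' := by
      intro v hv
      have hyu : Tendsto (fun k => y * useq (φ k)) atTop (nhds (y * u')) :=
        hconv.const_mul y
      rcases eq_or_lt_of_le hv.1 with heq | hvt
      · -- v = t : use the moving endpoint tseq n as test point
        subst heq
        apply eps_le
        intro ε hε
        have F1 : ∀ᶠ k in atTop, finf t - ε/3 < fseq (φ k) (tseq (φ k)) :=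
          (hend.comp hφ).eventually_const_lt (by linarith)
        have F2 : ∀ᶠ k in atTop, y * tseq (φ k) < y * t + ε/3 :=
          (((htlim.comp hφ)).const_mul y).eventually_lt_const (by linarith)
        have F3 := stepA (ε/6) (by linarith)
        have F4 : ∀ᶠ k in atTop, y * u' - ε/6 < y * useq (φ k) :=
          hyu.eventually_const_lt (by linarith)
        obtain ⟨k, h1, h2, h3, h4⟩ := (F1.and (F2.and (F3.and F4))).exists
        have hmax := (huseq (φ k)).2 (tseq (φ k))
          ⟨le_refl _, ((htseq (φ k)).2).le⟩
        linarith
      · -- v ∈ (t, m]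
        apply eps_le
        intro ε hε
        have F0 : ∀ᶠ k in atTop, tseq (φ k) ≤ v :=
          ((htlim.comp hφ).eventually_lt_const hvt).mono fun k h => h.le
        have F1 : ∀ᶠ k in atTop, finf v - ε/3 < fseq (φ k) v :=
          ((hptwise v ⟨hvt, hv.2⟩).comp hφ).eventually_const_lt (by linarith)
        have F3 := stepA (ε/3) (by linarith)
        have F4 : ∀ᶠ k in atTop, y * u' - ε/3 < y * useq (φ k) :=
          hyu.eventually_const_lt (by linarith)
        obtain ⟨k, h0, h1, h3, h4⟩ := (F0.and (F1.and (F3.and F4))).exists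
        have hmax := (huseq (φ k)).2 v ⟨h0, hv.2⟩
        linarith
    -- Step C: uniqueness of the maximizer by strict concavity
    by_contra hne
    have hw : (1/2 : ℝ) • u' + (1/2 : ℝ) • uinf ∈ Set.Icc t m := by
      simp only [smul_eq_mul]
      constructor
      · have := hu'.1; have := huinf.1.1; linarith
      · have := hu'.2; have := huinf.1.2; linarith
    have hs := hconcinf.2 hu' huinf.1 hne (by norm_num : (0:ℝ) < 1/2)
      (by norm_num : (0:ℝ) < 1/2) (by norm_num)
    simp only [smul_eq_mul] at hs hw
    have h1 := stepB uinf huinf.1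
    have h2 := huinf.2 u' hu'
    have h3 := huinf.2 _ hw
    have hyw : y * (1/2 * u' + 1/2 * uinf) = (y * u' + y * uinf)/2 := by ring
    linarith
  -- conclude via subsequences and compactness
  apply Filter.tendsto_of_subseq_tendsto
  intro ns hns
  have hmem : ∀ k, useq (ns k) ∈ Set.Icc t m := fun k =>
    ⟨(htseq (ns k)).1.trans (huseq (ns k)).1.1, (huseq (ns k)).1.2⟩
  obtain ⟨a, ha, ψ, hψ, hlim⟩ := (isCompact_Icc).tendsto_subseq hmem
  refine ⟨ψ, ?_⟩
  have heq : a = uinf := key a ha (fun k => ns (ψ k)) (hns.comp hψ.tendsto_atTop) hlim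
  exact heq ▸ hlim
end
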